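/- arXiv:2501.09572 — 2 statements merged into one kernel-verified Lean document; each statement's English description precedes it below -/
import Mathlib

section
/- There exists ε₀ > 0 such that for all 0 < ε ≤ ε₀ the following hold: w is continuous on [0,1] \ {x₀, 1−x₀}; w is Lebesgue integrable on [0,1]; w(x) > 0 for all x ∈ [0,1] \ {x₀, 1−x₀}; w(x) → ∞ as x → x₀ and as x → 1−x₀. Moreover, for every fixed x ∈ (0,1), p(x) → 1/6 and w(x) → 1 as ε → 0. -/
open Real Set Filter Topology MeasureTheory

/-- The degenerate point `x₀ = (2 − √3)ε`. -/
noncomputable def x0 (ε : ℝ) : ℝ := (2 - Real.sqrt 3) * ε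

/-- Leading coefficient `φ₂` of `D_ε` on the interval. -/
noncomputable def phi2 (ε x : ℝ) : ℝ :=
  if x ≤ ε then (1/12) * (1 - 4*(x/ε) + (x/ε)^2)
  else if x ≤ 1 - ε then -(1/6)
  else (1/12) * (1 - 4*((1-x)/ε) + ((1-x)/ε)^2)

/-- First-order coefficient `φ₁` of `D_ε` on the interval. -/
noncomputable def phi1 (ε x : ℝ) : ℝ :=
  if x ≤ ε then -6 * (1 - x/ε) * ((1 + x/ε)^3)⁻¹
  else if x ≤ 1 - ε then 0
  else 6 * (1 - (1-x)/ε) * ((1 + (1-x)/ε)^3)⁻¹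

/-- Integration-factor function `g` on `[0, ε]`. -/
noncomputable def gfun (ε x : ℝ) : ℝ :=
  Real.sign (x - x0 ε) * |x - x0 ε| ^ ((4 + 2*Real.sqrt 3) * ε) *
    |x - 4*ε + x0 ε| ^ ((4 - 2*Real.sqrt 3) * ε) *
    (x + ε) ^ (-(8*ε)) *
    Real.exp (12*ε^3/(ε+x)^2 + 12*ε^2/(ε+x))

/-- Sturm–Liouville principal coefficient `p`. -/
noncomputable def pfun (ε x : ℝ) : ℝ :=
  if x ≤ ε then gfun ε x / (6 * gfun ε ε)
  else if x ≤ 1 - ε then 1/6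
  else gfun ε (1-x) / (6 * gfun ε ε)

/-- Sturm–Liouville weight `w = -p/φ₂`. -/
noncomputable def wfun (ε x : ℝ) : ℝ := -pfun ε x / phi2 ε x

/-!
On `[0, ε]` we have `φ₂(x) = (x - x₀)(x - x₁)/(12ε²)` with `x₁ = (2 + √3)ε > ε`, and the factors
`sgn(x - x₀)|x - x₀|^a` and `|x - x₁|^b` of `g` (where `a = (4 + 2√3)ε`, `b = (4 - 2√3)ε`, and
`x - 4ε + x₀ = x - x₁`) absorb both zeros. Hence `w(x) = |x - x₀|^(a - 1) R(x)` with `R` continuous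
and positive on `[0, ε]`. For `ε ≤ 1/8` the exponent lies in `(-1, 0)`, so the singularity at `x₀`
is integrable and `w → ∞` there. On `[ε, 1 - ε]` we have `w = 1`, and `p`, `φ₂`, hence `w`, are
invariant under `x ↦ 1 - x`, which transfers everything to `[1 - ε, 1]`. A fixed `x ∈ (0, 1)` lies
in `[ε, 1 - ε]` for all small `ε`, where `p(x) = 1/6` and `w(x) = 1`.
-/

theorem abs_rpow_eq_abs_mul_abs_rpow_sub_one {u : ℝ} (hu : u ≠ 0) (s : ℝ) :
    |u| ^ s = |u| * |u| ^ (s - 1) := by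
  rw [rpow_sub_one (abs_ne_zero.2 hu)]
  field_simp [abs_ne_zero.2 hu]

section PowerSingularity

variable {G : ℝ → ℝ} {a b c r : ℝ}

theorem intervalIntegrable_abs_rpow (hr : -1 < r) (a b : ℝ) :
    IntervalIntegrable (fun x => |x| ^ r) volume a b := by
  have from_zero : ∀ t, 0 ≤ t → IntervalIntegrable (fun x => |x| ^ r) volume 0 t := by
    intro t ht
    rw [intervalIntegrable_iff_integrableOn_Ioc_of_le ht]
    refine ((intervalIntegrable_iff_integrableOn_Ioc_of_le ht).1
      (intervalIntegral.intervalIntegrable_rpow' hr)).congr_fun (fun x hx => ?_) measurableSet_Ioc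
    rw [abs_of_pos hx.1]
  have from_zero' : ∀ t, IntervalIntegrable (fun x => |x| ^ r) volume 0 t := by
    intro t
    rcases le_total 0 t with ht | ht
    · exact from_zero t ht
    · simpa using (from_zero (-t) (neg_nonneg.2 ht)).comp_sub_left 0
  exact (from_zero' a).symm.trans (from_zero' b)

theorem intervalIntegrable_abs_sub_rpow (hr : -1 < r) (a b c : ℝ) :
    IntervalIntegrable (fun x => |x - c| ^ r) volume a b := by
  simpa using (intervalIntegrable_abs_rpow hr (a - c) (b - c)).comp_sub_right c

theorem integrableOn_abs_sub_rpow_mul (hr : -1 < r) (hab : a ≤ b)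
    (hG : ContinuousOn G (Icc a b)) :
    IntegrableOn (fun x => |x - c| ^ r * G x) (Icc a b) :=
  ((intervalIntegrable_iff_integrableOn_Icc_of_le hab).1
    (intervalIntegrable_abs_sub_rpow hr a b c)).mul_continuousOn hG isCompact_Icc

theorem tendsto_abs_sub_rpow_mul_nhdsNE_atTop (hr : r < 0) (hG : ContinuousAt G c)
    (hGc : 0 < G c) : Tendsto (fun x => |x - c| ^ r * G x) (𝓝[≠] c) atTop := by
  have hsub : Tendsto (· - c) (𝓝[≠] c) (𝓝[≠] 0) := by
    simpa using ((continuous_sub_right c).continuousWithinAt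
      (s := {c}ᶜ) (x := c)).tendsto_nhdsWithin fun x hx => sub_ne_zero.2 hx
  exact ((tendsto_rpow_neg_nhdsGT_zero hr).comp (tendsto_abs_nhdsNE_zero.comp hsub)).atTop_mul_pos
    hGc (hG.tendsto.mono_left nhdsWithin_le_nhds)

end PowerSingularity

theorem ContinuousOn.union_diff_of_isClosed {α β : Type*} [TopologicalSpace α]
    [TopologicalSpace β] {f : α → β} {s t u : Set α} (hfs : ContinuousOn f (s \ u))
    (hft : ContinuousOn f (t \ u)) (hs : IsClosed s) (ht : IsClosed t) :
    ContinuousOn f ((s ∪ t) \ u) := by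
  rw [union_sdiff_distrib]
  have key : ∀ {v}, IsClosed v → ContinuousOn f (v \ u) → ∀ x ∉ u,
      ContinuousWithinAt f (v \ u) x := by
    intro v hv hfv x hxu
    by_cases hxv : x ∈ v
    · exact hfv x ⟨hxv, hxu⟩
    · exact continuousWithinAt_of_notMem_closure fun h => hxv (closure_minimal sdiff_subset hv h)
  intro x hx
  have hxu : x ∉ u := hx.elim (·.2) (·.2)
  exact (key hs hfs x hxu).union (key ht hft x hxu)

namespace SturmLiouvilleWeight

variable {ε x : ℝ}

lemma one_lt_sqrt_three : 1 < √3 := (lt_sqrt zero_le_one).2 (by norm_num)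

lemma sqrt_three_lt_two : √3 < 2 := (sqrt_lt' two_pos).2 (by norm_num)

noncomputable def x1 (ε : ℝ) : ℝ := (2 + √3) * ε

lemma x0_pos (hε : 0 < ε) : 0 < x0 ε := mul_pos (by linarith [sqrt_three_lt_two]) hε

lemma x0_lt (hε : 0 < ε) : x0 ε < ε := by
  unfold x0; nlinarith [one_lt_sqrt_three]

lemma lt_x1 (hε : 0 < ε) : ε < x1 ε := by
  unfold x1; nlinarith [sqrt_nonneg 3]

lemma phi2_of_le (hε : 0 < ε) (hx : x ≤ ε) :
    phi2 ε x = (x - x0 ε) * (x - x1 ε) / (12 * ε ^ 2) := by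
  rw [phi2, if_pos hx, x0, x1]
  field_simp
  linear_combination ε ^ 2 * sq_sqrt (zero_le_three : (0 : ℝ) ≤ 3)

noncomputable def gfunReg (ε x : ℝ) : ℝ :=
  |x - x1 ε| ^ ((4 - 2 * √3) * ε - 1) * (x + ε) ^ (-(8 * ε)) *
    exp (12 * ε ^ 3 / (ε + x) ^ 2 + 12 * ε ^ 2 / (ε + x))

lemma gfunReg_pos (hx : -ε < x) (hx1 : x < x1 ε) : 0 < gfunReg ε x := by
  unfold gfunReg
  have := abs_pos.2 (sub_neg.2 hx1).ne
  have : 0 < x + ε := by linarith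
  positivity

lemma continuousAt_gfunReg (hx : -ε < x) (hx1 : x < x1 ε) : ContinuousAt (gfunReg ε) x := by
  have h1 : x - x1 ε ≠ 0 := (sub_neg.2 hx1).ne
  have h2 : x + ε ≠ 0 := by linarith
  have h3 : ε + x ≠ 0 := by linarith
  unfold gfunReg
  fun_prop (disch := first | assumption | exact pow_ne_zero 2 h3 |
    exact Or.inl (abs_ne_zero.2 h1) | exact Or.inl h2)

lemma gfun_eq (hx1 : x < x1 ε) (hx0 : x ≠ x0 ε) :
    gfun ε x = -((x - x0 ε) * (x - x1 ε)) * |x - x0 ε| ^ ((4 + 2 * √3) * ε - 1) * gfunReg ε x := by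
  have hu : x - x0 ε ≠ 0 := sub_ne_zero.2 hx0
  have hv : x - 4 * ε + x0 ε = x - x1 ε := by rw [x0, x1]; ring
  rw [gfun, gfunReg, hv, abs_rpow_eq_abs_mul_abs_rpow_sub_one hu,
    abs_rpow_eq_abs_mul_abs_rpow_sub_one (sub_neg.2 hx1).ne,
    abs_of_neg (sub_neg.2 hx1)]
  rcases hu.lt_or_gt with h | h
  · rw [Real.sign_of_neg h, abs_of_neg h]; ring
  · rw [Real.sign_of_pos h, abs_of_pos h]; ring

lemma gfun_self_pos (hε : 0 < ε) : 0 < gfun ε ε := by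
  rw [gfun_eq (lt_x1 hε) (x0_lt hε).ne']
  have := sub_pos.2 (x0_lt hε)
  have := sub_neg.2 (lt_x1 hε)
  have := gfunReg_pos (by linarith : -ε < ε) (lt_x1 hε)
  have : 0 < -((ε - x0 ε) * (ε - x1 ε)) := by nlinarith
  positivity

noncomputable def wfunReg (ε x : ℝ) : ℝ := 2 * ε ^ 2 / gfun ε ε * gfunReg ε x

lemma wfunReg_pos (hε : 0 < ε) (hx : -ε < x) (hx1 : x < x1 ε) : 0 < wfunReg ε x :=
  mul_pos (div_pos (by positivity) (gfun_self_pos hε)) (gfunReg_pos hx hx1)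

lemma continuousAt_wfunReg (hx : -ε < x) (hx1 : x < x1 ε) : ContinuousAt (wfunReg ε) x :=
  continuousAt_const.mul (continuousAt_gfunReg hx hx1)

lemma continuousOn_wfunReg (hε : 0 < ε) : ContinuousOn (wfunReg ε) (Icc 0 ε) := fun _ hx =>
  (continuousAt_wfunReg (by linarith [hx.1]) (hx.2.trans_lt (lt_x1 hε))).continuousWithinAt

lemma wfun_eq_of_le (hε : 0 < ε) (hxε : x ≤ ε) (hx0 : x ≠ x0 ε) :
    wfun ε x = |x - x0 ε| ^ ((4 + 2 * √3) * ε - 1) * wfunReg ε x := by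
  have hx1 : x < x1 ε := hxε.trans_lt (lt_x1 hε)
  have hu : x - x0 ε ≠ 0 := sub_ne_zero.2 hx0
  have hv : x - x1 ε ≠ 0 := (sub_neg.2 hx1).ne
  rw [wfun, pfun, if_pos hxε, phi2_of_le hε hxε, gfun_eq hx1 hx0, wfunReg]
  field_simp [(gfun_self_pos hε).ne']
  ring

noncomputable def symmExt (ε c : ℝ) (L : ℝ → ℝ) (x : ℝ) : ℝ :=
  if x ≤ ε then L x else if x ≤ 1 - ε then c else L (1 - x)

section symmExt

variable {c : ℝ} {L : ℝ → ℝ}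

lemma symmExt_of_mem_Icc (hL : L ε = c) (hx : x ∈ Icc ε (1 - ε)) : symmExt ε c L x = c := by
  unfold symmExt
  split_ifs with h h'
  · rw [le_antisymm h hx.1, hL]
  · rfl
  · exact absurd hx.2 h'

lemma symmExt_one_sub (hε : ε < 1 / 2) (hL : L ε = c) (x : ℝ) :
    symmExt ε c L (1 - x) = symmExt ε c L x := by
  unfold symmExt
  split_ifs <;> first | rfl | linarith | rw [sub_sub_cancel] | skip
  -- what remains are the gluing points `x = 1 - ε` and `x = ε`
  · rw [show 1 - x = ε by linarith, hL]
  · rw [show x = ε by linarith, hL]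

end symmExt

lemma phi2_eq_symmExt (ε : ℝ) :
    phi2 ε = symmExt ε (-(1/6)) (fun y => (1/12) * (1 - 4*(y/ε) + (y/ε)^2)) := rfl

lemma pfun_eq_symmExt (ε : ℝ) :
    pfun ε = symmExt ε (1/6) (fun y => gfun ε y / (6 * gfun ε ε)) := rfl

lemma phi2_of_mem_Icc (hε : 0 < ε) (hx : x ∈ Icc ε (1 - ε)) : phi2 ε x = -(1/6) := by
  rw [phi2_eq_symmExt]
  exact symmExt_of_mem_Icc (by rw [div_self hε.ne']; norm_num) hx

lemma pfun_of_mem_Icc (hε : 0 < ε) (hx : x ∈ Icc ε (1 - ε)) : pfun ε x = 1/6 := by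
  rw [pfun_eq_symmExt]
  exact symmExt_of_mem_Icc (by field_simp [(gfun_self_pos hε).ne']) hx

lemma wfun_of_mem_Icc (hε : 0 < ε) (hx : x ∈ Icc ε (1 - ε)) : wfun ε x = 1 := by
  rw [wfun, pfun_of_mem_Icc hε hx, phi2_of_mem_Icc hε hx]
  norm_num

lemma wfun_one_sub (hε : 0 < ε) (hε2 : ε < 1 / 2) (x : ℝ) : wfun ε (1 - x) = wfun ε x := by
  have hphi2 : phi2 ε (1 - x) = phi2 ε x := by
    rw [phi2_eq_symmExt]
    exact symmExt_one_sub hε2 (by rw [div_self hε.ne']; norm_num) x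
  have hpfun : pfun ε (1 - x) = pfun ε x := by
    rw [pfun_eq_symmExt]
    exact symmExt_one_sub hε2 (by field_simp [(gfun_self_pos hε).ne']) x
  rw [wfun, wfun, hphi2, hpfun]

lemma wfun_pos_of_le (hε : 0 < ε) (hx : 0 ≤ x) (hxε : x ≤ ε) (hx0 : x ≠ x0 ε) :
    0 < wfun ε x := by
  rw [wfun_eq_of_le hε hxε hx0]
  have := abs_pos.2 (sub_ne_zero.2 hx0)
  have := wfunReg_pos hε (by linarith) (hxε.trans_lt (lt_x1 hε))
  positivity

lemma continuousOn_wfun_left (hε : 0 < ε) : ContinuousOn (wfun ε) (Icc 0 ε \ {x0 ε}) := by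
  have hpow : ContinuousOn (fun x => |x - x0 ε| ^ ((4 + 2 * √3) * ε - 1)) (Icc 0 ε \ {x0 ε}) :=
    fun x hx => (ContinuousAt.rpow_const (f := fun y => |y - x0 ε|) (by fun_prop)
      (Or.inl (abs_ne_zero.2 (sub_ne_zero.2 hx.2)))).continuousWithinAt
  exact (hpow.mul ((continuousOn_wfunReg hε).mono sdiff_subset)).congr
    fun x hx => wfun_eq_of_le hε hx.1.2 hx.2

lemma integrableOn_wfun_left (hε : 0 < ε) : IntegrableOn (wfun ε) (Icc 0 ε) := by
  have hexp : -1 < (4 + 2 * √3) * ε - 1 := by nlinarith [sqrt_nonneg 3]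
  refine (integrableOn_abs_sub_rpow_mul (c := x0 ε) hexp hε.le
    (continuousOn_wfunReg hε)).congr_fun_ae ?_
  filter_upwards [ae_restrict_mem measurableSet_Icc,
    ae_restrict_of_ae (Measure.ae_ne volume (x0 ε))] with x hx hx0
  exact (wfun_eq_of_le hε hx.2 hx0).symm

lemma tendsto_wfun_x0 (hε : 0 < ε) (hε1 : (4 + 2 * √3) * ε < 1) :
    Tendsto (wfun ε) (𝓝[≠] (x0 ε)) atTop := by
  have hx0 := x0_pos hε
  have hx0ε := x0_lt hε
  have hx0x1 := hx0ε.trans (lt_x1 hε)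
  refine (tendsto_abs_sub_rpow_mul_nhdsNE_atTop (show (4 + 2 * √3) * ε - 1 < 0 by linarith)
    (continuousAt_wfunReg (by linarith) hx0x1) (wfunReg_pos hε (by linarith) hx0x1)).congr' ?_
  filter_upwards [mem_nhdsWithin_of_mem_nhds (Iio_mem_nhds hx0ε), self_mem_nhdsWithin]
    with x hxε hx0
  exact (wfun_eq_of_le hε (le_of_lt hxε) hx0).symm

lemma continuousOn_wfun (hε : 0 < ε) (hε2 : ε < 1 / 2) :
    ContinuousOn (wfun ε) (Icc 0 1 \ {x0 ε, 1 - x0 ε}) := by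
  have hleft : ContinuousOn (wfun ε) (Icc 0 ε \ {x0 ε, 1 - x0 ε}) :=
    (continuousOn_wfun_left hε).mono (sdiff_subset_sdiff_right (by simp))
  have hmid : ContinuousOn (wfun ε) (Icc ε (1 - ε) \ {x0 ε, 1 - x0 ε}) :=
    (continuousOn_const.congr fun _ hx => wfun_of_mem_Icc hε hx).mono sdiff_subset
  have hright : ContinuousOn (wfun ε) (Icc (1 - ε) 1 \ {x0 ε, 1 - x0 ε}) := by
    rw [← funext (wfun_one_sub hε hε2)]
    refine (continuousOn_wfun_left hε).comp (by fun_prop) fun x hx => ?_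
    simp only [Set.mem_sdiff, mem_Icc, mem_insert_iff, mem_singleton_iff, not_or] at hx ⊢
    exact ⟨⟨by linarith, by linarith⟩, fun h => hx.2.2 (by linarith)⟩
  rw [← Icc_union_Icc_eq_Icc hε.le (by linarith : ε ≤ 1),
    ← Icc_union_Icc_eq_Icc (by linarith : ε ≤ 1 - ε) (by linarith : 1 - ε ≤ 1)]
  exact hleft.union_diff_of_isClosed (hmid.union_diff_of_isClosed hright isClosed_Icc isClosed_Icc)
    isClosed_Icc (isClosed_Icc.union isClosed_Icc)

lemma integrableOn_wfun (hε : 0 < ε) (hε2 : ε < 1 / 2) : IntegrableOn (wfun ε) (Icc 0 1) := by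
  have hleft : IntervalIntegrable (wfun ε) volume 0 ε :=
    (intervalIntegrable_iff_integrableOn_Icc_of_le hε.le).2 (integrableOn_wfun_left hε)
  have hmid : IntervalIntegrable (wfun ε) volume ε (1 - ε) := by
    refine ContinuousOn.intervalIntegrable (continuousOn_const (c := (1 : ℝ)).congr fun x hx => ?_)
    rw [uIcc_of_le (by linarith)] at hx
    exact wfun_of_mem_Icc hε hx
  have hright : IntervalIntegrable (wfun ε) volume (1 - ε) 1 := by
    simpa [wfun_one_sub hε hε2] using (hleft.comp_sub_left 1).symm
  exact (intervalIntegrable_iff_integrableOn_Icc_of_le zero_le_one).1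
    ((hleft.trans hmid).trans hright)

lemma wfun_pos (hε : 0 < ε) (hε2 : ε < 1 / 2) (hx : x ∈ Icc 0 1 \ {x0 ε, 1 - x0 ε}) :
    0 < wfun ε x := by
  have pos_of_le : ∀ y, 0 ≤ y → y ≤ 1 - ε → y ≠ x0 ε → 0 < wfun ε y := by
    intro y hy0 hy1 hyx0
    rcases le_or_gt y ε with hyε | hyε
    · exact wfun_pos_of_le hε hy0 hyε hyx0
    · rw [wfun_of_mem_Icc hε ⟨hyε.le, hy1⟩]
      exact one_pos
  simp only [Set.mem_sdiff, mem_Icc, mem_insert_iff, mem_singleton_iff, not_or] at hx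
  obtain ⟨⟨hx0, hx1⟩, hne, hne'⟩ := hx
  rcases le_or_gt x (1 - ε) with h | h
  · exact pos_of_le x hx0 h hne
  · rw [← wfun_one_sub hε hε2]
    exact pos_of_le (1 - x) (by linarith) (by linarith) fun h => hne' (by linarith)

lemma tendsto_wfun_one_sub_x0 (hε : 0 < ε) (hε2 : ε < 1 / 2) (hε1 : (4 + 2 * √3) * ε < 1) :
    Tendsto (wfun ε) (𝓝[≠] (1 - x0 ε)) atTop := by
  have hreflect : Tendsto (fun x => 1 - x) (𝓝[≠] (1 - x0 ε)) (𝓝[≠] (x0 ε)) := by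
    simpa using ((continuous_sub_left (1 : ℝ)).continuousWithinAt
      (s := {1 - x0 ε}ᶜ) (x := 1 - x0 ε)).tendsto_nhdsWithin (t := {x0 ε}ᶜ)
      fun x hx h => hx (by rw [mem_singleton_iff] at h ⊢; linarith)
  rw [← funext (wfun_one_sub hε hε2)]
  exact (tendsto_wfun_x0 hε hε1).comp hreflect

end SturmLiouvilleWeight

open SturmLiouvilleWeight

theorem stmt2 :
    (∃ ε₀ > (0:ℝ), ∀ ε : ℝ, 0 < ε → ε ≤ ε₀ →
      ContinuousOn (wfun ε) (Icc 0 1 \ {x0 ε, 1 - x0 ε}) ∧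
      IntegrableOn (wfun ε) (Icc 0 1) ∧
      (∀ x ∈ Icc (0:ℝ) 1 \ {x0 ε, 1 - x0 ε}, 0 < wfun ε x) ∧
      Tendsto (wfun ε) (𝓝[≠] (x0 ε)) atTop ∧
      Tendsto (wfun ε) (𝓝[≠] (1 - x0 ε)) atTop) ∧
    (∀ x ∈ Ioo (0:ℝ) 1,
      Tendsto (fun ε => pfun ε x) (𝓝[>] (0:ℝ)) (𝓝 (1/6)) ∧
      Tendsto (fun ε => wfun ε x) (𝓝[>] (0:ℝ)) (𝓝 1)) := by
  refine ⟨⟨1 / 8, by norm_num, fun ε hε hε8 => ?_⟩, fun x hx => ?_⟩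
  · have hε2 : ε < 1 / 2 := by linarith
    have hε1 : (4 + 2 * √3) * ε < 1 := by nlinarith [sqrt_three_lt_two]
    exact ⟨continuousOn_wfun hε hε2, integrableOn_wfun hε hε2, fun x hx => wfun_pos hε hε2 hx,
      tendsto_wfun_x0 hε hε1, tendsto_wfun_one_sub_x0 hε hε2 hε1⟩
  · have hmid : ∀ᶠ ε in 𝓝[>] (0 : ℝ), 0 < ε ∧ x ∈ Icc ε (1 - ε) := by
      filter_upwards [self_mem_nhdsWithin, nhdsWithin_le_nhds (eventually_lt_nhds hx.1),
        nhdsWithin_le_nhds (eventually_lt_nhds (sub_pos.2 hx.2))] with ε hε hεx hεx'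
      exact ⟨hε, hεx.le, by linarith⟩
    exact ⟨tendsto_const_nhds.congr' (hmid.mono fun ε h => (pfun_of_mem_Icc h.1 h.2).symm),
      tendsto_const_nhds.congr' (hmid.mono fun ε h => (wfun_of_mem_Icc h.1 h.2).symm)⟩
end

section
/- For every x ∈ [0,1] \ {x₀, 1−x₀}, p is differentiable at x with p'(x) = φ₁(x)·p(x)/φ₂(x). Consequently, for every u ∈ C²([0,1]) and λ ∈ ℝ, the equation φ₂(x)u''(x) + φ₁(x)u'(x) = λu(x) holds for all x ∈ [0,1] if and only if the Sturm–Liouville equation −(p(x)u'(x))' = λ·w(x)·u(x) holds for all x ∈ [0,1] \ {x₀, 1−x₀}. -/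
open Real Set Filter Topology MeasureTheory

/-! The function `g` is an integrating factor: away from its zeros its logarithmic derivative,
computed factor by factor, is the rational function `φ₁/φ₂` on `[0, ε]`, the exponents
`(4 ± 2√3)ε` being the residues of `φ₁/φ₂` at the roots `(2 ∓ √3)ε` of `φ₂`. Hence `p' = φ₁ p/φ₂`
on `[0, ε]`, trivially on the flat middle part, and on `[1 - ε, 1]` by the symmetries
`p(1-x) = p(x)`, `φ₂(1-x) = φ₂(x)`, `φ₁(1-x) = -φ₁(x)`. Then `(p u')' = p (φ₂ u'' + φ₁ u')/φ₂`
and `-λ w u = λ p u/φ₂`, so the two equations agree wherever `p φ₂ ≠ 0`; at the two roots of `φ₂`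
the equation `φ₂ u'' + φ₁ u' = λ u` follows by continuity. -/

theorem HasDerivAt.mul_logDeriv {f g : ℝ → ℝ} {x a b : ℝ} (hf : HasDerivAt f (f x * a) x)
    (hg : HasDerivAt g (g x * b) x) :
    HasDerivAt (fun y => f y * g y) (f x * g x * (a + b)) x :=
  (hf.mul hg).congr_deriv (by ring)

theorem Real.hasDerivAt_sign {x : ℝ} (hx : x ≠ 0) : HasDerivAt Real.sign 0 x := by
  rcases hx.lt_or_gt with hx | hx
  · exact (hasDerivAt_const x (-1)).congr_of_eventuallyEq
      (eventually_lt_nhds hx |>.mono fun y hy => Real.sign_of_neg hy)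
  · exact (hasDerivAt_const x 1).congr_of_eventuallyEq
      (eventually_gt_nhds hx |>.mono fun y hy => Real.sign_of_pos hy)

theorem HasDerivAt.rpow_const_logDeriv {f : ℝ → ℝ} {x f' r : ℝ} (hf : HasDerivAt f f' x)
    (hx : f x ≠ 0) : HasDerivAt (fun y => f y ^ r) (f x ^ r * (r * f' / f x)) x :=
  (hf.rpow_const (Or.inl hx)).congr_deriv (by rw [rpow_sub_one hx]; ring)

theorem hasDerivAt_abs_rpow_of_ne_zero {x r : ℝ} (hx : x ≠ 0) :
    HasDerivAt (fun y => |y| ^ r) (|x| ^ r * (r / x)) x := by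
  refine ((hasDerivAt_abs hx).rpow_const_logDeriv (abs_ne_zero.2 hx)).congr_deriv ?_
  rcases hx.lt_or_gt with h | h
  · simp [h, abs_of_neg h]
  · simp [h, abs_of_pos h]

theorem hasDerivAt_gfun {ε x : ℝ} (h₁ : x ≠ x0 ε) (h₂ : x - 4 * ε + x0 ε ≠ 0)
    (h₃ : x + ε ≠ 0) :
    HasDerivAt (gfun ε) (gfun ε x * ((4 + 2 * √3) * ε / (x - x0 ε)
      + (4 - 2 * √3) * ε / (x - 4 * ε + x0 ε) - 8 * ε / (x + ε)
      - 24 * ε ^ 3 / (ε + x) ^ 3 - 12 * ε ^ 2 / (ε + x) ^ 2)) x := by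
  have h₁' : x - x0 ε ≠ 0 := sub_ne_zero.2 h₁
  have h₃' : ε + x ≠ 0 := by rwa [add_comm]
  have hsign : HasDerivAt (fun y => Real.sign (y - x0 ε)) (Real.sign (x - x0 ε) * 0) x :=
    (Real.hasDerivAt_sign h₁').comp_sub_const.congr_deriv (mul_zero _).symm
  have hA : HasDerivAt (fun y => |y - x0 ε| ^ ((4 + 2 * √3) * ε))
      (|x - x0 ε| ^ ((4 + 2 * √3) * ε) * ((4 + 2 * √3) * ε / (x - x0 ε))) x :=
    (hasDerivAt_abs_rpow_of_ne_zero h₁').comp_sub_const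
  have hB : HasDerivAt (fun y => |y - 4 * ε + x0 ε| ^ ((4 - 2 * √3) * ε))
      (|x - 4 * ε + x0 ε| ^ ((4 - 2 * √3) * ε) * ((4 - 2 * √3) * ε / (x - 4 * ε + x0 ε))) x := by
    have h := (hasDerivAt_abs_rpow_of_ne_zero (r := (4 - 2 * √3) * ε) h₂).comp x
      (((hasDerivAt_id' x).sub_const (4 * ε)).add_const (x0 ε))
    rwa [mul_one] at h
  have hC := ((hasDerivAt_id' x).add_const ε).rpow_const_logDeriv (r := -(8 * ε)) h₃
  have hE : HasDerivAt (fun y => exp (12 * ε ^ 3 / (ε + y) ^ 2 + 12 * ε ^ 2 / (ε + y)))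
      (exp (12 * ε ^ 3 / (ε + x) ^ 2 + 12 * ε ^ 2 / (ε + x)) *
        (-(24 * ε ^ 3 / (ε + x) ^ 3) - 12 * ε ^ 2 / (ε + x) ^ 2)) x := by
    have h : HasDerivAt (fun y => 12 * ε ^ 3 / (ε + y) ^ 2 + 12 * ε ^ 2 / (ε + y))
        (-(24 * ε ^ 3 / (ε + x) ^ 3) - 12 * ε ^ 2 / (ε + x) ^ 2) x :=
      ((hasDerivAt_const x _).fun_div (((hasDerivAt_id' x).const_add ε).fun_pow 2)
        (pow_ne_zero 2 h₃')).add ((hasDerivAt_const x _).fun_div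
          ((hasDerivAt_id' x).const_add ε) h₃') |>.congr_deriv (by field_simp; ring)
    exact h.exp
  refine (((hsign.mul_logDeriv hA).mul_logDeriv hB).mul_logDeriv hC).mul_logDeriv hE
    |>.congr_deriv ?_
  simp only [gfun]
  ring

theorem x0_pos {ε : ℝ} (hε : 0 < ε) : 0 < x0 ε :=
  mul_pos (sub_pos.2 <| by rw [Real.sqrt_lt' two_pos]; norm_num) hε

theorem x0_lt_self {ε : ℝ} (hε : 0 < ε) : x0 ε < ε := by
  have : 1 < √3 := by rw [Real.lt_sqrt zero_le_one]; norm_num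
  unfold x0; nlinarith

theorem sub_x0_mul_sub_x0 (ε x : ℝ) :
    (x - x0 ε) * (x - 4 * ε + x0 ε) = x ^ 2 - 4 * ε * x + ε ^ 2 := by
  unfold x0; linear_combination (-ε ^ 2) * Real.sq_sqrt (show (0:ℝ) ≤ 3 by norm_num)

theorem phi2_left_eq {ε : ℝ} (hε : ε ≠ 0) (x : ℝ) :
    1 / 12 * (1 - 4 * (x / ε) + (x / ε) ^ 2) = (x - x0 ε) * (x - 4 * ε + x0 ε) / (12 * ε ^ 2) := by
  rw [sub_x0_mul_sub_x0]; field_simp; ring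

theorem gfun_logDeriv_eq {ε x : ℝ} (hε : ε ≠ 0) (h₁ : x ≠ x0 ε) (h₂ : x - 4 * ε + x0 ε ≠ 0)
    (h₃ : x + ε ≠ 0) :
    (4 + 2 * √3) * ε / (x - x0 ε) + (4 - 2 * √3) * ε / (x - 4 * ε + x0 ε) - 8 * ε / (x + ε)
      - 24 * ε ^ 3 / (ε + x) ^ 3 - 12 * ε ^ 2 / (ε + x) ^ 2
      = -6 * (1 - x / ε) * ((1 + x / ε) ^ 3)⁻¹ / (1 / 12 * (1 - 4 * (x / ε) + (x / ε) ^ 2)) := by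
  have h₁' : x - x0 ε ≠ 0 := sub_ne_zero.2 h₁
  have hq : x ^ 2 - 4 * ε * x + ε ^ 2 ≠ 0 := sub_x0_mul_sub_x0 ε x ▸ mul_ne_zero h₁' h₂
  have hnum : (4 + 2 * √3) * ε * (x - 4 * ε + x0 ε) + (x - x0 ε) * ((4 - 2 * √3) * ε)
      = 8 * ε * x - 28 * ε ^ 2 := by
    unfold x0; linear_combination (-4 * ε ^ 2) * Real.sq_sqrt (show (0:ℝ) ≤ 3 by norm_num)
  have h₃' : ε + x ≠ 0 := by rwa [add_comm]
  rw [div_add_div _ _ h₁' h₂, hnum, sub_x0_mul_sub_x0, phi2_left_eq hε, sub_x0_mul_sub_x0]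
  rw [div_sub_div _ _ hq h₃, div_sub_div _ _ (mul_ne_zero hq h₃) (pow_ne_zero 3 h₃'),
    div_sub_div _ _ (mul_ne_zero (mul_ne_zero hq h₃) (pow_ne_zero 3 h₃')) (pow_ne_zero 2 h₃'),
    div_eq_div_iff (by positivity) (by simp [hq, hε])]
  field_simp
  ring

theorem hasDerivAt_gfun_of_le {ε x : ℝ} (hε : 0 < ε) (hx₀ : -ε < x) (hxε : x ≤ ε)
    (hx : x ≠ x0 ε) : HasDerivAt (gfun ε) (phi1 ε x * gfun ε x / phi2 ε x) x := by
  have h₂ : x - 4 * ε + x0 ε ≠ 0 := by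
    have := x0_lt_self hε; linarith
  have h₃ : x + ε ≠ 0 := by linarith
  refine (hasDerivAt_gfun hx h₂ h₃).congr_deriv ?_
  rw [gfun_logDeriv_eq hε.ne' hx h₂ h₃, phi1, phi2, if_pos hxε, if_pos hxε]
  ring

theorem gfun_ne_zero {ε x : ℝ} (h₁ : x ≠ x0 ε) (h₂ : x - 4 * ε + x0 ε ≠ 0) (h₃ : 0 < x + ε) :
    gfun ε x ≠ 0 := by
  have h₁' : x - x0 ε ≠ 0 := sub_ne_zero.2 h₁
  unfold gfun
  refine mul_ne_zero (mul_ne_zero (mul_ne_zero (mul_ne_zero ?_ ?_) ?_) ?_) (exp_pos _).ne'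
  · rcases h₁'.lt_or_gt with h | h
    · simp [Real.sign_of_neg h]
    · simp [Real.sign_of_pos h]
  · exact (rpow_pos_of_pos (abs_pos.2 h₁') _).ne'
  · exact (rpow_pos_of_pos (abs_pos.2 h₂) _).ne'
  · exact (rpow_pos_of_pos h₃ _).ne'

theorem gfun_of_le_ne_zero {ε x : ℝ} (hε : 0 < ε) (hx₀ : -ε < x) (hxε : x ≤ ε)
    (hx : x ≠ x0 ε) : gfun ε x ≠ 0 :=
  gfun_ne_zero hx (by have := x0_lt_self hε; linarith) (by linarith)

theorem phi2_of_mem_Icc {ε x : ℝ} (hε : ε ≠ 0) (h₁ : ε ≤ x) (h₂ : x ≤ 1 - ε) :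
    phi2 ε x = -(1 / 6) := by
  rcases h₁.eq_or_lt with rfl | h
  · simp [phi2, hε]; norm_num
  · rw [phi2, if_neg h.not_ge, if_pos h₂]

theorem phi1_of_mem_Icc {ε x : ℝ} (hε : ε ≠ 0) (h₁ : ε ≤ x) (h₂ : x ≤ 1 - ε) :
    phi1 ε x = 0 := by
  rcases h₁.eq_or_lt with rfl | h
  · simp [phi1, hε]
  · rw [phi1, if_neg h.not_ge, if_pos h₂]

theorem pfun_of_mem_Icc {ε x : ℝ} (hg : gfun ε ε ≠ 0) (h₁ : ε ≤ x) (h₂ : x ≤ 1 - ε) :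
    pfun ε x = 1 / 6 := by
  rcases h₁.eq_or_lt with rfl | h
  · rw [pfun, if_pos le_rfl]; field_simp
  · rw [pfun, if_neg h.not_ge, if_pos h₂]

theorem phi2_one_sub {ε : ℝ} (hε₀ : 0 < ε) (hε₁ : ε < 1 / 2) (x : ℝ) :
    phi2 ε (1 - x) = phi2 ε x := by
  have left : ∀ y < ε, phi2 ε (1 - y) = phi2 ε y := fun y hy => by
    rw [phi2, phi2, if_neg (by linarith), if_neg (by linarith), if_pos hy.le, sub_sub_cancel]
  rcases lt_or_ge x ε with h₁ | h₁
  · exact left x h₁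
  rcases le_or_gt x (1 - ε) with h₂ | h₂
  · rw [phi2_of_mem_Icc hε₀.ne' (by linarith) (by linarith), phi2_of_mem_Icc hε₀.ne' h₁ h₂]
  · simpa using (left (1 - x) (by linarith)).symm

theorem phi1_one_sub {ε : ℝ} (hε₀ : 0 < ε) (hε₁ : ε < 1 / 2) (x : ℝ) :
    phi1 ε (1 - x) = -phi1 ε x := by
  have left : ∀ y < ε, phi1 ε (1 - y) = -phi1 ε y := fun y hy => by
    rw [phi1, phi1, if_neg (by linarith), if_neg (by linarith), if_pos hy.le, sub_sub_cancel]
    ring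
  rcases lt_or_ge x ε with h₁ | h₁
  · exact left x h₁
  rcases le_or_gt x (1 - ε) with h₂ | h₂
  · rw [phi1_of_mem_Icc hε₀.ne' (by linarith) (by linarith), phi1_of_mem_Icc hε₀.ne' h₁ h₂,
      neg_zero]
  · have h := left (1 - x) (by linarith)
    rw [sub_sub_cancel] at h
    linarith

theorem pfun_one_sub {ε : ℝ} (hε₀ : 0 < ε) (hε₁ : ε < 1 / 2) (x : ℝ) :
    pfun ε (1 - x) = pfun ε x := by
  have hg := gfun_of_le_ne_zero hε₀ (by linarith) le_rfl (x0_lt_self hε₀).ne'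
  have left : ∀ y < ε, pfun ε (1 - y) = pfun ε y := fun y hy => by
    rw [pfun, pfun, if_neg (by linarith), if_neg (by linarith), if_pos hy.le, sub_sub_cancel]
  rcases lt_or_ge x ε with h₁ | h₁
  · exact left x h₁
  rcases le_or_gt x (1 - ε) with h₂ | h₂
  · rw [pfun_of_mem_Icc hg (by linarith) (by linarith), pfun_of_mem_Icc hg h₁ h₂]
  · simpa using (left (1 - x) (by linarith)).symm

theorem hasDerivAt_ite_le {f g : ℝ → ℝ} {a d : ℝ} (hf : HasDerivAt f d a)
    (hg : HasDerivAt g d a) (hfg : f a = g a) :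
    HasDerivAt (fun y => if y ≤ a then f y else g y) d a := by
  have hl : HasDerivWithinAt (fun y => if y ≤ a then f y else g y) d (Iic a) a :=
    hf.hasDerivWithinAt.congr (fun y hy => if_pos hy) (if_pos le_rfl)
  have hr : HasDerivWithinAt (fun y => if y ≤ a then f y else g y) d (Ici a) a := by
    refine hg.hasDerivWithinAt.congr (fun y hy => ?_) (by rw [if_pos le_rfl, hfg])
    rcases (mem_Ici.1 hy).eq_or_lt with rfl | h
    · rw [if_pos le_rfl, hfg]
    · exact if_neg h.not_ge
  simpa [Iic_union_Ici] using hl.union hr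

theorem forall_regular_of_forall_le_half {ε : ℝ} {P : ℝ → Prop} (hP : ∀ x, P (1 - x) → P x)
    (h : ∀ x, 0 ≤ x → x ≤ 1 / 2 → x ≠ x0 ε → P x) :
    ∀ x ∈ Icc (0:ℝ) 1 \ {x0 ε, 1 - x0 ε}, P x := by
  rintro x ⟨⟨hx₀, hx₁⟩, hx⟩
  simp only [mem_insert_iff, mem_singleton_iff, not_or] at hx
  rcases le_total x (1 / 2) with hx' | hx'
  · exact h x hx₀ hx' hx.1
  · exact hP x (h (1 - x) (by linarith) (by linarith) fun h => hx.2 (by linarith))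

theorem hasDerivAt_pfun_of_le_half {ε x : ℝ} (hε₀ : 0 < ε) (hε₁ : ε < 1 / 2) (hx₀ : 0 ≤ x)
    (hx₁ : x ≤ 1 / 2) (hx : x ≠ x0 ε) :
    HasDerivAt (pfun ε) (phi1 ε x * pfun ε x / phi2 ε x) x := by
  have hg := gfun_of_le_ne_zero hε₀ (by linarith) le_rfl (x0_lt_self hε₀).ne'
  rcases lt_trichotomy x ε with hxε | rfl | hxε
  · have heq : pfun ε =ᶠ[𝓝 x] fun y => gfun ε y / (6 * gfun ε ε) :=
      (eventually_lt_nhds hxε).mono fun y hy => if_pos hy.le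
    refine ((hasDerivAt_gfun_of_le hε₀ (by linarith) hxε.le hx).div_const _).congr_of_eventuallyEq
      heq |>.congr_deriv ?_
    rw [pfun, if_pos hxε.le]
    ring
  · have heq : pfun x =ᶠ[𝓝 x] fun y => if y ≤ x then gfun x y / (6 * gfun x x) else 1 / 6 :=
      (eventually_lt_nhds (by linarith : x < 1 - x)).mono fun y hy => by
        simp only [pfun, if_pos hy.le]
    have hgx := (hasDerivAt_gfun_of_le hε₀ (by linarith) le_rfl hx).div_const (6 * gfun x x)
    simp only [phi1_of_mem_Icc hε₀.ne' le_rfl (by linarith : x ≤ 1 - x), zero_mul, zero_div]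
      at hgx ⊢
    exact (hasDerivAt_ite_le hgx (hasDerivAt_const x _) (by field_simp)).congr_of_eventuallyEq heq
  · have heq : pfun ε =ᶠ[𝓝 x] fun _ => 1 / 6 :=
      eventually_of_mem (Ioo_mem_nhds hxε (by linarith : x < 1 - ε)) fun y hy =>
        pfun_of_mem_Icc hg hy.1.le hy.2.le
    rw [phi1_of_mem_Icc hε₀.ne' hxε.le (by linarith), zero_mul, zero_div]
    exact (hasDerivAt_const x _).congr_of_eventuallyEq heq

theorem hasDerivAt_pfun {ε : ℝ} (hε₀ : 0 < ε) (hε₁ : ε < 1 / 2) :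
    ∀ x ∈ Icc (0:ℝ) 1 \ {x0 ε, 1 - x0 ε},
      HasDerivAt (pfun ε) (phi1 ε x * pfun ε x / phi2 ε x) x := by
  refine forall_regular_of_forall_le_half (fun x hx => ?_)
    fun x hx₀ hx₁ hx => hasDerivAt_pfun_of_le_half hε₀ hε₁ hx₀ hx₁ hx
  have h := hx.comp_const_sub 1 x
  simp only [pfun_one_sub hε₀ hε₁, phi1_one_sub hε₀ hε₁, phi2_one_sub hε₀ hε₁] at h
  exact h.congr_deriv (by ring)

theorem phi2_ne_zero {ε : ℝ} (hε₀ : 0 < ε) (hε₁ : ε < 1 / 2) :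
    ∀ x ∈ Icc (0:ℝ) 1 \ {x0 ε, 1 - x0 ε}, phi2 ε x ≠ 0 := by
  refine forall_regular_of_forall_le_half (fun x hx => by rwa [← phi2_one_sub hε₀ hε₁])
    fun x hx₀ hx₁ hx => ?_
  rcases le_or_gt x ε with hxε | hxε
  · have h₂ : x - 4 * ε + x0 ε ≠ 0 := by have := x0_lt_self hε₀; linarith
    rw [phi2, if_pos hxε, phi2_left_eq hε₀.ne']
    exact div_ne_zero (mul_ne_zero (sub_ne_zero.2 hx) h₂) (by positivity)
  · rw [phi2_of_mem_Icc hε₀.ne' hxε.le (by linarith)]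
    norm_num

theorem pfun_ne_zero {ε : ℝ} (hε₀ : 0 < ε) (hε₁ : ε < 1 / 2) :
    ∀ x ∈ Icc (0:ℝ) 1 \ {x0 ε, 1 - x0 ε}, pfun ε x ≠ 0 := by
  have hg := gfun_of_le_ne_zero hε₀ (by linarith) le_rfl (x0_lt_self hε₀).ne'
  refine forall_regular_of_forall_le_half (fun x hx => by rwa [← pfun_one_sub hε₀ hε₁])
    fun x hx₀ hx₁ hx => ?_
  rcases le_or_gt x ε with hxε | hxε
  · rw [pfun, if_pos hxε]
    exact div_ne_zero (gfun_of_le_ne_zero hε₀ (by linarith) hxε hx) (by positivity)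
  · rw [pfun_of_mem_Icc hg hxε.le (by linarith)]
    norm_num

theorem continuousAt_phi1_of_lt {ε x : ℝ} (hε : 0 < ε) (hx₀ : 0 ≤ x) (hxε : x < ε) :
    ContinuousAt (phi1 ε) x := by
  have hpos : (1 + x / ε) ^ 3 ≠ 0 := by positivity
  have hc : ContinuousAt (fun y => -6 * (1 - y / ε) * ((1 + y / ε) ^ 3)⁻¹) x := by
    fun_prop (disch := assumption)
  exact hc.congr ((eventually_lt_nhds hxε).mono fun y hy => (if_pos hy.le).symm)

theorem continuousAt_phi2_of_lt {ε x : ℝ} (hxε : x < ε) : ContinuousAt (phi2 ε) x := by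
  have hc : ContinuousAt (fun y => 1 / 12 * (1 - 4 * (y / ε) + (y / ε) ^ 2)) x := by fun_prop
  exact hc.congr ((eventually_lt_nhds hxε).mono fun y hy => (if_pos hy.le).symm)

theorem continuousAt_phi_of_singular {ε x : ℝ} (hε₀ : 0 < ε) (hε₁ : ε < 1 / 2)
    (hx : x ∈ ({x0 ε, 1 - x0 ε} : Set ℝ)) :
    ContinuousAt (phi1 ε) x ∧ ContinuousAt (phi2 ε) x := by
  have h₁ := continuousAt_phi1_of_lt hε₀ (x0_pos hε₀).le (x0_lt_self hε₀)
  have h₂ := continuousAt_phi2_of_lt (x0_lt_self hε₀)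
  rcases hx with rfl | rfl
  · exact ⟨h₁, h₂⟩
  · have hreflect : ContinuousAt (fun y : ℝ => 1 - y) (1 - x0 ε) := by fun_prop
    constructor
    · have e : phi1 ε = fun y => -phi1 ε (1 - y) :=
        funext fun y => by rw [phi1_one_sub hε₀ hε₁, neg_neg]
      rw [e]
      exact (h₁.comp_of_eq hreflect (sub_sub_cancel _ _)).neg
    · simpa [Function.comp_def, phi2_one_sub hε₀ hε₁] using
        h₂.comp_of_eq hreflect (sub_sub_cancel _ _)

theorem singular_mem_closure_regular {ε x : ℝ} (hε₀ : 0 < ε) (hε₁ : ε < 1 / 2)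
    (hx : x ∈ ({x0 ε, 1 - x0 ε} : Set ℝ)) :
    x ∈ closure (Icc (0:ℝ) 1 \ {x0 ε, 1 - x0 ε}) := by
  have h₀ := x0_pos hε₀
  have h₁ := x0_lt_self hε₀
  rcases hx with rfl | rfl
  · have hsub : Ioo 0 (x0 ε) ⊆ Icc (0:ℝ) 1 \ {x0 ε, 1 - x0 ε} := fun y hy => by
      simp only [Set.mem_sdiff, mem_Icc, mem_insert_iff, mem_singleton_iff, mem_Ioo] at hy ⊢
      exact ⟨⟨hy.1.le, by linarith⟩, by rintro (h | h) <;> linarith⟩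
    exact closure_mono hsub (by rw [closure_Ioo h₀.ne]; exact ⟨h₀.le, le_rfl⟩)
  · have hsub : Ioo (1 - x0 ε) 1 ⊆ Icc (0:ℝ) 1 \ {x0 ε, 1 - x0 ε} := fun y hy => by
      simp only [Set.mem_sdiff, mem_Icc, mem_insert_iff, mem_singleton_iff, mem_Ioo] at hy ⊢
      exact ⟨⟨by linarith, hy.2.le⟩, by rintro (h | h) <;> linarith⟩
    exact closure_mono hsub (by rw [closure_Ioo (by linarith)]; exact ⟨le_rfl, by linarith⟩)

theorem eq_of_continuousWithinAt_of_mem_closure {X Y : Type*} [TopologicalSpace X]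
    [TopologicalSpace Y] [T1Space Y] {f : X → Y} {s : Set X} {a : X} {c : Y}
    (hf : ContinuousWithinAt f s a) (ha : a ∈ closure s) (h : ∀ y ∈ s, f y = c) : f a = c := by
  simpa using hf.mem_closure ha (t := {c}) h

theorem hasDerivAt_mul_iff_of_hasDerivAt_div {p v : ℝ → ℝ} {x a b v' c lam : ℝ}
    (hp : HasDerivAt p (b * p x / a) x) (hv : HasDerivAt v v' x) (hpx : p x ≠ 0) (ha : a ≠ 0) :
    HasDerivAt (fun y => p y * v y) (-(lam * (-p x / a) * c)) x ↔ a * v' + b * v x = lam * c := by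
  have key : -(lam * (-p x / a) * c) = b * p x / a * v x + p x * v' ↔
      a * v' + b * v x = lam * c := by
    constructor <;> intro h
    · field_simp at h
      linarith
    · field_simp
      linarith
  rw [← key]
  exact ⟨fun h => h.unique (hp.mul hv), fun h => h ▸ hp.mul hv⟩

theorem ode_iff_sturmLiouville_of_regular {ε x lam : ℝ} {u u' : ℝ → ℝ} {u'' : ℝ}
    (hε₀ : 0 < ε) (hε₁ : ε < 1 / 2) (hx : x ∈ Icc (0:ℝ) 1 \ {x0 ε, 1 - x0 ε})
    (hu' : HasDerivAt u' u'' x) :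
    phi2 ε x * u'' + phi1 ε x * u' x = lam * u x ↔
      HasDerivAt (fun y => pfun ε y * u' y) (-(lam * wfun ε x * u x)) x :=
  (hasDerivAt_mul_iff_of_hasDerivAt_div (hasDerivAt_pfun hε₀ hε₁ x hx) hu'
    (pfun_ne_zero hε₀ hε₁ x hx) (phi2_ne_zero hε₀ hε₁ x hx)).symm

theorem stmt3 (ε : ℝ) (hε : ε ∈ Ioo (0:ℝ) (1/2)) :
    (∀ x ∈ Icc (0:ℝ) 1 \ {x0 ε, 1 - x0 ε},
        HasDerivAt (pfun ε) (phi1 ε x * pfun ε x / phi2 ε x) x) ∧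
    (∀ (u u' u'' : ℝ → ℝ) (lam : ℝ),
      (∀ x ∈ Icc (0:ℝ) 1, HasDerivAt u (u' x) x) →
      (∀ x ∈ Icc (0:ℝ) 1, HasDerivAt u' (u'' x) x) →
      ContinuousOn u'' (Icc 0 1) →
      ((∀ x ∈ Icc (0:ℝ) 1, phi2 ε x * u'' x + phi1 ε x * u' x = lam * u x) ↔
        (∀ x ∈ Icc (0:ℝ) 1 \ {x0 ε, 1 - x0 ε},
          HasDerivAt (fun y => pfun ε y * u' y) (-(lam * wfun ε x * u x)) x))) := by
  obtain ⟨hε₀, hε₁⟩ := hε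
  refine ⟨hasDerivAt_pfun hε₀ hε₁, fun u u' u'' lam hu hu' hu'' => ⟨fun hode x hx =>
    (ode_iff_sturmLiouville_of_regular hε₀ hε₁ hx (hu' x hx.1)).1 (hode x hx.1),
    fun hsl x hx => ?_⟩⟩
  by_cases hsing : x ∈ ({x0 ε, 1 - x0 ε} : Set ℝ)
  · obtain ⟨hφ₁, hφ₂⟩ := continuousAt_phi_of_singular hε₀ hε₁ hsing
    have hres : ContinuousWithinAt (fun y => phi2 ε y * u'' y + phi1 ε y * u' y - lam * u y)
        (Icc 0 1 \ {x0 ε, 1 - x0 ε}) x :=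
      ((hφ₂.continuousWithinAt.mul ((hu'' x hx).mono Set.sdiff_subset)).add
        (hφ₁.continuousWithinAt.mul (hu' x hx).continuousAt.continuousWithinAt)).sub
        (continuousWithinAt_const.mul (hu x hx).continuousAt.continuousWithinAt)
    have hzero := eq_of_continuousWithinAt_of_mem_closure hres
      (singular_mem_closure_regular hε₀ hε₁ hsing) fun y hy =>
        sub_eq_zero.2 ((ode_iff_sturmLiouville_of_regular hε₀ hε₁ hy (hu' y hy.1)).2 (hsl y hy))
    exact sub_eq_zero.1 hzero
  · exact (ode_iff_sturmLiouville_of_regular hε₀ hε₁ ⟨hx, hsing⟩ (hu' x hx)).2 (hsl x ⟨hx, hsing⟩)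
end
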